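/- Let P = conv{(3,−2),(2,−2)} ⊆ ℝ^2 and Q = conv{(3,−2),(2,−2),(2,−1)} ⊆ ℝ^2, so P ⊆ Q are lattice polytopes (of dimensions 1 and 2), and let w(x) = (2x_1+3x_2)^2. Then h*_{P,w}(t) = 4t^2 + 4t and h*_{Q,w}(t) = t^2 + 5t; consequently h*_{P,w}(t) ⪯ h*_{Q,w}(t) fails coefficient-wise, and even h*_{P,w}(1) = 8 > 6 = h*_{Q,w}(1). Hence coefficient-wise and value-wise monotonicity of weighted h*-polynomials under inclusion can fail when the two polytopes have different dimensions. -/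

import Mathlib

/-!
Both polytopes are unimodular simplices having the vertex `A = (3,-2)` on the line
`2x₁ + 3x₂ = 0`. So the lattice points of `nQ` are the `aA + bB + cC` with `a + b + c = n` in `ℕ`,
where the linear form takes the values `0, -2, 1` at `A, B, C` and the weight is `(c - 2b)²`;
likewise those of `nP` are the `aA + bB` with `a + b = n`, of weight `4b²`. The weighted Ehrhart
series is therefore `1/(1-t)` (the free coordinate `a`) times a series in `b, c` assembled from
`Σ tⁿ = 1/(1-t)`, `Σ n tⁿ = t/(1-t)²` and `Σ n² tⁿ = (t + t²)/(1-t)³`.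
-/

open scoped Pointwise

noncomputable section

/-- The segment `P = conv{(3,−2),(2,−2)} ⊆ ℝ²`. -/
def segP : Set (Fin 2 → ℝ) := convexHull ℝ ({![3, -2], ![2, -2]} : Set (Fin 2 → ℝ))

/-- The triangle `Q = conv{(3,−2),(2,−2),(2,−1)} ⊆ ℝ²`. -/
def triQ : Set (Fin 2 → ℝ) :=
  convexHull ℝ ({![3, -2], ![2, -2], ![2, -1]} : Set (Fin 2 → ℝ))

section ConvexHull

variable {𝕜 E : Type*} [Field 𝕜] [LinearOrder 𝕜] [IsStrictOrderedRing 𝕜] [AddCommGroup E]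
  [Module 𝕜 E] {A B C v : E}

theorem mem_convexHull_triple :
    v ∈ convexHull 𝕜 {A, B, C} ↔
      ∃ a b c : 𝕜, 0 ≤ a ∧ 0 ≤ b ∧ 0 ≤ c ∧ a + b + c = 1 ∧ a • A + b • B + c • C = v := by
  constructor
  · intro hv
    refine convexHull_min (t := {x | ∃ a b c : 𝕜, 0 ≤ a ∧ 0 ≤ b ∧ 0 ≤ c ∧ a + b + c = 1 ∧
      a • A + b • B + c • C = x}) ?_ ?_ hv
    · rintro _ (rfl | rfl | rfl)
      · exact ⟨1, 0, 0, by norm_num, by norm_num, by norm_num, by norm_num, by simp⟩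
      · exact ⟨0, 1, 0, by norm_num, by norm_num, by norm_num, by norm_num, by simp⟩
      · exact ⟨0, 0, 1, by norm_num, by norm_num, by norm_num, by norm_num, by simp⟩
    · rintro _ ⟨a, b, c, ha, hb, hc, habc, rfl⟩ _ ⟨a', b', c', ha', hb', hc', habc', rfl⟩
        s t hs ht hst
      exact ⟨s * a + t * a', s * b + t * b', s * c + t * c', by positivity, by positivity,
        by positivity, by linear_combination s * habc + t * habc' + hst, by module⟩
  · rintro ⟨a, b, c, ha, hb, hc, habc, rfl⟩
    refine mem_convexHull_of_exists_fintype ![a, b, c] ![A, B, C] ?_ ?_ ?_ ?_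
    · simp [Fin.forall_fin_succ, ha, hb, hc]
    · simpa [Fin.sum_univ_three] using habc
    · simp [Fin.forall_fin_succ]
    · simp [Fin.sum_univ_three]

theorem mem_smul_convexHull_triple {n : 𝕜} (hn : 0 ≤ n) :
    v ∈ n • convexHull 𝕜 {A, B, C} ↔
      ∃ a b c : 𝕜, 0 ≤ a ∧ 0 ≤ b ∧ 0 ≤ c ∧ a + b + c = n ∧ a • A + b • B + c • C = v := by
  simp_rw [Set.mem_smul_set, mem_convexHull_triple]
  constructor
  · rintro ⟨_, ⟨a, b, c, ha, hb, hc, habc, rfl⟩, rfl⟩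
    exact ⟨n * a, n * b, n * c, by positivity, by positivity, by positivity,
      by linear_combination n * habc, by module⟩
  · rintro ⟨a, b, c, ha, hb, hc, habc, rfl⟩
    rcases hn.eq_or_lt with rfl | hn
    · obtain ⟨rfl, rfl, rfl⟩ : a = 0 ∧ b = 0 ∧ c = 0 := by
        refine ⟨?_, ?_, ?_⟩ <;> linarith
      exact ⟨A, ⟨1, 0, 0, by norm_num, by norm_num, by norm_num, by norm_num, by simp⟩, by simp⟩
    · refine ⟨(a / n) • A + (b / n) • B + (c / n) • C, ⟨a / n, b / n, c / n, by positivity,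
        by positivity, by positivity, by field_simp; linarith, rfl⟩, ?_⟩
      simp only [smul_add, smul_smul, mul_div_cancel₀ _ hn.ne']

theorem mem_smul_convexHull_pair {n : 𝕜} (hn : 0 ≤ n) :
    v ∈ n • convexHull 𝕜 {A, B} ↔
      ∃ a b : 𝕜, 0 ≤ a ∧ 0 ≤ b ∧ a + b = n ∧ a • A + b • B = v := by
  rw [show ({A, B} : Set E) = {A, B, B} by simp, mem_smul_convexHull_triple hn]
  constructor
  · rintro ⟨a, b, c, ha, hb, hc, habc, rfl⟩
    exact ⟨a, b + c, ha, add_nonneg hb hc, by rw [← habc, add_assoc], by rw [add_smul, add_assoc]⟩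
  · rintro ⟨a, b, ha, hb, hab, rfl⟩
    exact ⟨a, b, 0, ha, hb, le_rfl, by rw [add_zero, hab], by simp⟩

end ConvexHull

namespace PowerSeries

variable {R : Type*} [CommRing R]

theorem mk_mul_one_sub_X (f : ℕ → R) :
    mk f * (1 - X) = C (f 0) + X * mk fun n => f (n + 1) - f n := by
  ext (_ | n)
  · simp
  · simp [mul_sub, coeff_succ_mul_X, coeff_succ_X_mul]

theorem mk_natCast_mul_one_sub_X_sq : (mk fun n => (n : R)) * (1 - X) ^ 2 = X := by
  have hdiff : (mk fun n => ((n + 1 : ℕ) : R) - n) = mk 1 := by ext; simp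
  rw [sq, ← mul_assoc, mk_mul_one_sub_X, hdiff, Nat.cast_zero, map_zero]
  linear_combination (X : R⟦X⟧) * mk_one_mul_one_sub_eq_one R

theorem mk_natCast_sq_mul_one_sub_X_cube :
    (mk fun n => (n : R) ^ 2) * (1 - X) ^ 3 = X + X ^ 2 := by
  have hdiff : (mk fun n => ((n + 1 : ℕ) : R) ^ 2 - (n : R) ^ 2)
      = C 2 * (mk fun n => (n : R)) + mk 1 := by
    ext n
    simp only [coeff_mk, map_add, coeff_C_mul, Pi.one_apply]
    push_cast
    ring
  rw [pow_succ', ← mul_assoc, mk_mul_one_sub_X, hdiff, map_ofNat, Nat.cast_zero,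
    zero_pow two_ne_zero, map_zero]
  linear_combination 2 * (X : R⟦X⟧) * mk_natCast_mul_one_sub_X_sq (R := R) +
    X * (1 - X) * mk_one_mul_one_sub_eq_one R

end PowerSeries

section LatticePoints

open Finset

theorem mem_smul_segP {n : ℕ} {x : Fin 2 → ℤ} :
    (fun i => (x i : ℝ)) ∈ (n : ℝ) • segP ↔
      ∃ a b : ℕ, a + b = n ∧ a • ![3, -2] + b • ![2, -2] = x := by
  rw [segP, mem_smul_convexHull_pair (Nat.cast_nonneg n)]
  constructor
  · rintro ⟨a, b, ha, hb, hab, hx⟩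
    have h0 := congrFun hx 0
    have h1 := congrFun hx 1
    simp only [Pi.add_apply, Pi.smul_apply, Matrix.cons_val_zero, Matrix.cons_val_one,
      smul_eq_mul] at h0 h1
    have hlow : (2 * n : ℤ) ≤ x 0 := by exact_mod_cast (by linarith : (2 * n : ℝ) ≤ x 0)
    have hhigh : x 0 ≤ 3 * n := by exact_mod_cast (by linarith : (x 0 : ℝ) ≤ 3 * n)
    have hx1 : x 1 = -(2 * n : ℤ) := by exact_mod_cast (by linarith : (x 1 : ℝ) = -(2 * n))
    refine ⟨(x 0 - 2 * n).toNat, (3 * n - x 0).toNat, by omega, ?_⟩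
    ext i
    fin_cases i <;>
      simp only [Fin.zero_eta, Fin.mk_one, Pi.add_apply, nsmul_eq_mul, Pi.mul_apply,
        Pi.natCast_apply, Matrix.cons_val_zero, Matrix.cons_val_one] <;> omega
  · rintro ⟨a, b, hab, rfl⟩
    refine ⟨a, b, a.cast_nonneg, b.cast_nonneg, by exact_mod_cast hab, ?_⟩
    ext i; fin_cases i <;> simp

theorem mem_smul_triQ {n : ℕ} {x : Fin 2 → ℤ} :
    (fun i => (x i : ℝ)) ∈ (n : ℝ) • triQ ↔
      ∃ a b c : ℕ, a + b + c = n ∧ a • ![3, -2] + b • ![2, -2] + c • ![2, -1] = x := by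
  rw [triQ, mem_smul_convexHull_triple (Nat.cast_nonneg n)]
  constructor
  · rintro ⟨a, b, c, ha, hb, hc, habc, hx⟩
    have h0 := congrFun hx 0
    have h1 := congrFun hx 1
    simp only [Pi.add_apply, Pi.smul_apply, Matrix.cons_val_zero, Matrix.cons_val_one,
      smul_eq_mul] at h0 h1
    have ha' : (2 * n : ℤ) ≤ x 0 := by exact_mod_cast (by linarith : (2 * n : ℝ) ≤ x 0)
    have hb' : x 0 + x 1 ≤ n := by exact_mod_cast (by linarith : (x 0 + x 1 : ℝ) ≤ n)
    have hc' : -(2 * n : ℤ) ≤ x 1 := by exact_mod_cast (by linarith : -(2 * n : ℝ) ≤ x 1)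
    -- `Q` is unimodular: its barycentric coordinates are integral affine functions of `x`.
    refine ⟨(x 0 - 2 * n).toNat, (n - x 0 - x 1).toNat, (x 1 + 2 * n).toNat, by omega, ?_⟩
    ext i
    fin_cases i <;>
      simp only [Fin.zero_eta, Fin.mk_one, Pi.add_apply, nsmul_eq_mul, Pi.mul_apply,
        Pi.natCast_apply, Matrix.cons_val_zero, Matrix.cons_val_one] <;> omega
  · rintro ⟨a, b, c, habc, rfl⟩
    refine ⟨a, b, c, a.cast_nonneg, b.cast_nonneg, c.cast_nonneg, by exact_mod_cast habc, ?_⟩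
    ext i; fin_cases i <;> simp

def ehrhartWeight (x : Fin 2 → ℤ) : ℝ := (2 * (x 0 : ℝ) + 3 * (x 1 : ℝ)) ^ 2

def weightedEhrhart (S : Set (Fin 2 → ℝ)) (n : ℕ) : ℝ :=
  ∑ᶠ x ∈ {x : Fin 2 → ℤ | (fun i => (x i : ℝ)) ∈ (n : ℝ) • S}, ehrhartWeight x

theorem weightedEhrhart_segP (n : ℕ) :
    weightedEhrhart segP n = ∑ p ∈ antidiagonal n, 4 * (p.2 : ℝ) ^ 2 := by
  set φ : ℕ × ℕ → Fin 2 → ℤ := fun p => p.1 • ![3, -2] + p.2 • ![2, -2]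
  have hpts : {x : Fin 2 → ℤ | (fun i => (x i : ℝ)) ∈ (n : ℝ) • segP} =
      φ '' ↑(antidiagonal n) := by
    ext x
    simp [φ, mem_smul_segP]
  have hφ : Function.Injective φ := by
    intro p q h
    have h0 := congrFun h 0
    have h1 := congrFun h 1
    simp only [φ, Pi.add_apply, nsmul_eq_mul, Pi.mul_apply, Pi.natCast_apply,
      Matrix.cons_val_zero, Matrix.cons_val_one] at h0 h1
    ext <;> omega
  rw [weightedEhrhart, hpts, finsum_mem_image hφ.injOn, finsum_mem_coe_finset]
  refine sum_congr rfl fun p _ => ?_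
  simp only [φ, ehrhartWeight, Pi.add_apply, nsmul_eq_mul, Pi.mul_apply, Pi.natCast_apply,
      Matrix.cons_val_zero, Matrix.cons_val_one]
  push_cast
  ring

theorem weightedEhrhart_triQ (n : ℕ) :
    weightedEhrhart triQ n =
      ∑ p ∈ antidiagonal n, ∑ q ∈ antidiagonal p.2, ((q.2 : ℝ) - 2 * q.1) ^ 2 := by
  set φ : (Σ _ : ℕ × ℕ, ℕ × ℕ) → Fin 2 → ℤ :=
    fun q => q.1.1 • ![3, -2] + q.2.1 • ![2, -2] + q.2.2 • ![2, -1]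
  set I := (antidiagonal n).sigma fun p => antidiagonal p.2
  have hpts : {x : Fin 2 → ℤ | (fun i => (x i : ℝ)) ∈ (n : ℝ) • triQ} = φ '' ↑I := by
    ext x
    simp only [Set.mem_ofPred_eq, mem_smul_triQ, Set.mem_image, mem_coe, I, mem_sigma,
      HasAntidiagonal.mem_antidiagonal]
    constructor
    · rintro ⟨a, b, c, habc, rfl⟩
      exact ⟨⟨(a, b + c), (b, c)⟩, ⟨by dsimp only; omega, rfl⟩, rfl⟩
    · rintro ⟨⟨⟨a, m⟩, ⟨b, c⟩⟩, ⟨ham, hbc⟩, rfl⟩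
      exact ⟨a, b, c, by simp only at ham hbc; omega, rfl⟩
  have hφ : Set.InjOn φ I := by
    rintro ⟨⟨a, m⟩, ⟨b, c⟩⟩ hq ⟨⟨a', m'⟩, ⟨b', c'⟩⟩ hq' h
    have h0 := congrFun h 0
    have h1 := congrFun h 1
    simp only [φ, Pi.add_apply, nsmul_eq_mul, Pi.mul_apply, Pi.natCast_apply,
      Matrix.cons_val_zero, Matrix.cons_val_one] at h0 h1
    simp only [I, coe_sigma, Set.mem_sigma_iff, mem_coe, HasAntidiagonal.mem_antidiagonal] at hq hq'
    obtain ⟨rfl, rfl, rfl, rfl⟩ : a = a' ∧ m = m' ∧ b = b' ∧ c = c' := by omega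
    rfl
  rw [weightedEhrhart, hpts, finsum_mem_image hφ, finsum_mem_coe_finset, sum_sigma]
  refine sum_congr rfl fun p _ => sum_congr rfl fun q _ => ?_
  simp only [φ, ehrhartWeight, Pi.add_apply, nsmul_eq_mul, Pi.mul_apply, Pi.natCast_apply,
      Matrix.cons_val_zero, Matrix.cons_val_one]
  push_cast
  ring

end LatticePoints

open PowerSeries

theorem mk_weightedEhrhart_segP :
    mk (weightedEhrhart segP) = mk 1 * (C 4 * mk fun n => (n : ℝ) ^ 2) := by
  ext n
  rw [coeff_mk, weightedEhrhart_segP, coeff_mul]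
  simp

theorem mk_weightedEhrhart_triQ :
    mk (weightedEhrhart triQ) = mk 1 * (mk 1 * (mk fun n => (n : ℝ) ^ 2)
      - C 4 * ((mk fun n => (n : ℝ)) * mk fun n => (n : ℝ))
      + C 4 * ((mk fun n => (n : ℝ) ^ 2) * mk 1)) := by
  ext n
  rw [coeff_mk, weightedEhrhart_triQ, coeff_mul]
  refine Finset.sum_congr rfl fun p _ => ?_
  rw [map_add, map_sub, coeff_C_mul, coeff_C_mul]
  simp only [coeff_mk, coeff_mul, Pi.one_apply, one_mul, mul_one, Finset.mul_sum,
    ← Finset.sum_sub_distrib, ← Finset.sum_add_distrib]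
  exact Finset.sum_congr rfl fun q _ => by ring

theorem mk_weightedEhrhart_segP_mul_one_sub_X_pow :
    mk (weightedEhrhart segP) * (1 - X) ^ 4
      = ((Polynomial.C (4 : ℝ) * Polynomial.X ^ 2 + Polynomial.C 4 * Polynomial.X
          : Polynomial ℝ) : PowerSeries ℝ) := by
  push_cast
  rw [mk_weightedEhrhart_segP]
  simp only [map_ofNat]
  calc _ = 4 * (mk 1 * (1 - X)) * ((mk fun n => (n : ℝ) ^ 2) * (1 - X) ^ 3) := by ring
    _ = _ := by
      rw [mk_one_mul_one_sub_eq_one, mk_natCast_sq_mul_one_sub_X_cube]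
      ring

theorem mk_weightedEhrhart_triQ_mul_one_sub_X_pow :
    mk (weightedEhrhart triQ) * (1 - X) ^ 5
      = ((Polynomial.X ^ 2 + Polynomial.C (5 : ℝ) * Polynomial.X : Polynomial ℝ)
        : PowerSeries ℝ) := by
  push_cast
  rw [mk_weightedEhrhart_triQ]
  simp only [map_ofNat]
  calc _ = (mk 1 * (1 - X)) * ((mk 1 * (1 - X)) * ((mk fun n => (n : ℝ) ^ 2) * (1 - X) ^ 3) * 5
        - 4 * ((mk fun n => (n : ℝ)) * (1 - X) ^ 2) ^ 2) := by ring
    _ = _ := by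
      rw [mk_one_mul_one_sub_eq_one, mk_natCast_mul_one_sub_X_sq, mk_natCast_sq_mul_one_sub_X_cube]
      ring

/-- For the lattice polytopes `P = conv{(3,−2),(2,−2)} ⊆ Q =
conv{(3,−2),(2,−2),(2,−1)}` (of dimensions 1 and 2) and the weight `w(x) = (2x₁+3x₂)²`, one has
`h*_{P,w}(t) = 4t² + 4t` and `h*_{Q,w}(t) = t² + 5t` (the `h*`-polynomials being defined by
`Σ_{n≥0}(Σ_{x∈nP∩ℤ²} w(x)) tⁿ = h*_{P,w}(t)/(1−t)^{1+2+1}` and similarly for `Q` with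
`(1−t)^{2+2+1}`); consequently coefficient-wise monotonicity `h*_{P,w} ⪯ h*_{Q,w}` fails, and
even `h*_{Q,w}(1) = 6 < 8 = h*_{P,w}(1)`. -/
theorem monotonicity_fails_different_dimensions :
    (PowerSeries.mk fun n =>
        ∑ᶠ x ∈ {x : Fin 2 → ℤ | (fun i => ((x i : ℝ))) ∈ (n : ℝ) • segP},
          (2 * (x 0 : ℝ) + 3 * (x 1 : ℝ)) ^ 2)
        * (1 - PowerSeries.X) ^ 4
      = ((Polynomial.C (4 : ℝ) * Polynomial.X ^ 2 + Polynomial.C 4 * Polynomial.X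
          : Polynomial ℝ) : PowerSeries ℝ) ∧
    (PowerSeries.mk fun n =>
        ∑ᶠ x ∈ {x : Fin 2 → ℤ | (fun i => ((x i : ℝ))) ∈ (n : ℝ) • triQ},
          (2 * (x 0 : ℝ) + 3 * (x 1 : ℝ)) ^ 2)
        * (1 - PowerSeries.X) ^ 5
      = ((Polynomial.X ^ 2 + Polynomial.C (5 : ℝ) * Polynomial.X : Polynomial ℝ)
        : PowerSeries ℝ) ∧
    ¬ (∀ n, (Polynomial.C (4 : ℝ) * Polynomial.X ^ 2 + Polynomial.C 4 * Polynomial.X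
          : Polynomial ℝ).coeff n
        ≤ (Polynomial.X ^ 2 + Polynomial.C (5 : ℝ) * Polynomial.X : Polynomial ℝ).coeff n) ∧
    Polynomial.eval (1 : ℝ)
        (Polynomial.X ^ 2 + Polynomial.C (5 : ℝ) * Polynomial.X : Polynomial ℝ)
      < Polynomial.eval (1 : ℝ)
        (Polynomial.C (4 : ℝ) * Polynomial.X ^ 2 + Polynomial.C 4 * Polynomial.X
          : Polynomial ℝ) := by
  refine ⟨mk_weightedEhrhart_segP_mul_one_sub_X_pow, mk_weightedEhrhart_triQ_mul_one_sub_X_pow,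
    fun h => ?_, by norm_num⟩
  simpa using h 2
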